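/- Let m ∈ ℕ and let X₁,…,X_m be Banach spaces such that X_j has cotype q_j with 2 ≤ q_j < ∞ for each j = 1,…,m. Then for every Banach space Y and every s > 0 with 1/s ≤ 1/q₁ + ⋯ + 1/q_m, every continuous m-linear mapping T : X₁ × ⋯ × X_m → Y is absolutely (s;1)-summing, i.e., ∑_j ‖T(x_j^{(1)},…,x_j^{(m)})‖^s < ∞ whenever (x_j^{(k)})_j is weakly 1-summable in X_k for each k. -/

import Mathlib

/-!
By Banach–Steinhaus, the Rademacher sums `∑ ±x_j` of a weakly summable sequence are
uniformly bounded, so cotype `q` puts `(‖x_j‖)` in `ℓ^q`. Since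
`‖T(x¹_j, …, xᵐ_j)‖ ≤ ‖T‖ ∏ₖ ‖xᵏ_j‖`, it remains to see that a product of sequences in
`ℓ^{q_k}` lies in `ℓ^s`: with `c_j = ∑ₖ ‖xᵏ_j‖^{q_k}` each factor is at most `c_j^{1/q_k}`,
so the `s`-th power of the product is at most `c_j^{s ∑ 1/q_k}`, which is `≤ c_j` once
`c_j ≤ 1` because `s ∑ 1/q_k ≥ 1`.
-/

open scoped BigOperators

/-- A sequence in a normed space is *weakly 1-summable*. -/
def WeaklySummable (𝕂 : Type*) [RCLike 𝕂] {X : Type*} [NormedAddCommGroup X]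
    [NormedSpace 𝕂 X] (x : ℕ → X) : Prop :=
  ∀ φ : X →L[𝕂] 𝕂, Summable fun j => ‖φ (x j)‖

/-- A normed space has cotype `q` (Rademacher averages written as an average over signs). -/
def HasCotype (X : Type*) [NormedAddCommGroup X] (q : ℝ) : Prop :=
  ∃ C : ℝ, 0 ≤ C ∧ ∀ (k : ℕ) (x : Fin k → X),
    (∑ j, ‖x j‖ ^ q) ^ (1 / q) ≤
      C * Real.sqrt ((2 ^ k : ℝ)⁻¹ *
        ∑ ε : Fin k → Bool, ‖∑ j, (if ε j then x j else -x j)‖ ^ 2)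

open Finset

def signedSum {X : Type*} [AddCommGroup X] (x : ℕ → X) (n : ℕ) (ε : Fin n → Bool) : X :=
  ∑ j, if ε j then x j else -x j

section WeaklySummable

variable {𝕂 : Type*} [RCLike 𝕂] {X : Type*} [NormedAddCommGroup X] [NormedSpace 𝕂 X]

theorem norm_apply_signedSum_le_tsum (φ : StrongDual 𝕂 X) {x : ℕ → X}
    (hφ : Summable fun j => ‖φ (x j)‖) (n : ℕ) (ε : Fin n → Bool) :
    ‖φ (signedSum x n ε)‖ ≤ ∑' j, ‖φ (x j)‖ :=
  calc ‖φ (signedSum x n ε)‖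
      ≤ ∑ j : Fin n, ‖φ (if ε j then x j else -x j)‖ := by
        rw [signedSum, map_sum]; exact norm_sum_le _ _
    _ = ∑ j ∈ range n, ‖φ (x j)‖ := by
        rw [← Fin.sum_univ_eq_sum_range]
        exact sum_congr rfl fun j _ => by split_ifs <;> simp
    _ ≤ ∑' j, ‖φ (x j)‖ := hφ.sum_le_tsum _ fun _ _ => norm_nonneg _

theorem WeaklySummable.exists_norm_signedSum_le {x : ℕ → X} (hx : WeaklySummable 𝕂 x) :
    ∃ B, ∀ n ε, ‖signedSum x n ε‖ ≤ B := by
  let g : (Σ n, Fin n → Bool) → StrongDual 𝕂 (StrongDual 𝕂 X) := fun i =>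
    NormedSpace.inclusionInDoubleDualLi 𝕂 (signedSum x i.1 i.2)
  obtain ⟨B, hB⟩ := banach_steinhaus (g := g) fun φ =>
    ⟨_, fun i => norm_apply_signedSum_le_tsum φ (hx φ) i.1 i.2⟩
  exact ⟨B, fun n ε => by simpa [g, LinearIsometry.norm_map] using hB ⟨n, ε⟩⟩

end WeaklySummable

theorem Real.sqrt_inv_card_mul_sum_sq_le {ι : Type*} [Fintype ι] [Nonempty ι] {f : ι → ℝ}
    {B : ℝ} (hf₀ : ∀ i, 0 ≤ f i) (hfB : ∀ i, f i ≤ B) :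
    √((Fintype.card ι : ℝ)⁻¹ * ∑ i, f i ^ 2) ≤ B := by
  have hB : 0 ≤ B := (hf₀ (Classical.arbitrary ι)).trans (hfB _)
  have hcard : (0 : ℝ) < Fintype.card ι := by exact_mod_cast Fintype.card_pos
  have hsum : ∑ i, f i ^ 2 ≤ Fintype.card ι * B ^ 2 := by
    simpa using sum_le_card_nsmul univ (f · ^ 2) (B ^ 2) fun i _ =>
      pow_le_pow_left₀ (hf₀ i) (hfB i) 2
  rw [Real.sqrt_le_left hB, inv_mul_le_iff₀ hcard]
  exact hsum

theorem HasCotype.summable_norm_rpow (𝕂 : Type*) [RCLike 𝕂] {X : Type*} [NormedAddCommGroup X]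
    [NormedSpace 𝕂 X] {q : ℝ} (hq : 0 < q) (hX : HasCotype X q) {x : ℕ → X}
    (hx : WeaklySummable 𝕂 x) : Summable fun j => ‖x j‖ ^ q := by
  obtain ⟨B, hB⟩ := hx.exists_norm_signedSum_le
  obtain ⟨C, hC₀, hC⟩ := hX
  refine summable_of_sum_range_le (c := (C * B) ^ q) (fun _ => by positivity) fun n => ?_
  have hrad : √((2 ^ n : ℝ)⁻¹ * ∑ ε : Fin n → Bool, ‖signedSum x n ε‖ ^ 2) ≤ B := by
    simpa using Real.sqrt_inv_card_mul_sum_sq_le (fun ε => norm_nonneg _) (hB n)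
  have hroot : (∑ j : Fin n, ‖x j‖ ^ q) ^ q⁻¹ ≤ C * B := by
    simpa using (hC n fun j => x j).trans (mul_le_mul_of_nonneg_left hrad hC₀)
  have hB₀ : 0 ≤ B := (norm_nonneg _).trans (hB 0 finZeroElim)
  rw [← Fin.sum_univ_eq_sum_range (fun j => ‖x j‖ ^ q)]
  exact (Real.rpow_inv_le_iff_of_pos (by positivity) (mul_nonneg hC₀ hB₀) hq).mp hroot

theorem Summable.rpow_of_one_le {ι : Type*} {f : ι → ℝ} (hf : Summable f) (hf₀ : ∀ i, 0 ≤ f i)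
    {p : ℝ} (hp : 1 ≤ p) : Summable fun i => f i ^ p := by
  refine Summable.of_norm_bounded_eventually hf ?_
  filter_upwards [hf.tendsto_cofinite_zero.eventually (Iic_mem_nhds zero_lt_one)] with i hi
  rw [Real.norm_of_nonneg (Real.rpow_nonneg (hf₀ i) p)]
  exact Real.rpow_le_self_of_le_one (hf₀ i) hi hp

theorem prod_rpow_le_sum_rpow_rpow {ι : Type*} [Fintype ι] {a q : ι → ℝ} (ha : ∀ k, 0 ≤ a k)
    (hq : ∀ k, 0 < q k) {s : ℝ} (hs : 0 ≤ s) :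
    (∏ k, a k) ^ s ≤ (∑ k, a k ^ q k) ^ (s * ∑ k, 1 / q k) := by
  set c := ∑ k, a k ^ q k
  have hc : 0 ≤ c := sum_nonneg fun k _ => Real.rpow_nonneg (ha k) _
  have hac : ∀ k, a k ≤ c ^ (q k)⁻¹ := fun k =>
    (Real.le_rpow_inv_iff_of_pos (ha k) hc (hq k)).mpr
      (single_le_sum (f := fun k => a k ^ q k) (fun k _ => Real.rpow_nonneg (ha k) _) (mem_univ k))
  calc (∏ k, a k) ^ s = ∏ k, a k ^ s := (Real.finsetProd_rpow _ _ (fun k _ => ha k) s).symm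
    _ ≤ ∏ k, (c ^ (q k)⁻¹) ^ s :=
        prod_le_prod (fun k _ => Real.rpow_nonneg (ha k) s)
          fun k _ => Real.rpow_le_rpow (ha k) (hac k) hs
    _ = c ^ (s * ∑ k, 1 / q k) := by
        rw [mul_sum,
          Real.rpow_sum_of_nonneg hc fun k _ => mul_nonneg hs (one_div_pos.mpr (hq k)).le]
        exact prod_congr rfl fun k _ => by rw [← Real.rpow_mul hc]; ring_nf

theorem summable_prod_rpow_of_summable_rpow {ι : Type*} [Fintype ι] {a : ι → ℕ → ℝ}
    (ha : ∀ k j, 0 ≤ a k j) {q : ι → ℝ} (hq : ∀ k, 0 < q k)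
    (hsum : ∀ k, Summable fun j => a k j ^ q k) {s : ℝ} (hs : 0 < s)
    (hsq : 1 / s ≤ ∑ k, 1 / q k) :
    Summable fun j => (∏ k, a k j) ^ s := by
  have hexp : 1 ≤ s * ∑ k, 1 / q k := by rwa [← div_le_iff₀' hs]
  refine Summable.of_nonneg_of_le (fun j => Real.rpow_nonneg (prod_nonneg fun k _ => ha k j) s)
    (fun j => prod_rpow_le_sum_rpow_rpow (ha · j) hq hs.le)
    ((summable_sum fun k _ => hsum k).rpow_of_one_le
      (fun j => sum_nonneg fun k _ => Real.rpow_nonneg (ha k j) _) hexp)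

theorem stmt7_general (𝕂 : Type*) [RCLike 𝕂] (m : ℕ)
    (X : Fin m → Type*) [∀ k, NormedAddCommGroup (X k)]
    [∀ k, NormedSpace 𝕂 (X k)]
    (q : Fin m → ℝ) (hq2 : ∀ k, 2 ≤ q k) (hcot : ∀ k, HasCotype (X k) (q k))
    (Y : Type*) [NormedAddCommGroup Y] [NormedSpace 𝕂 Y]
    (s : ℝ) (hs : 0 < s) (hs1 : 1 / s ≤ ∑ k, 1 / q k)
    (T : ContinuousMultilinearMap 𝕂 X Y)
    (x : ∀ k, ℕ → X k) (hx : ∀ k, WeaklySummable 𝕂 (x k)) :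
    Summable fun j => ‖T fun k => x k j‖ ^ s := by
  have hq : ∀ k, 0 < q k := fun k => two_pos.trans_le (hq2 k)
  have hprod : Summable fun j => (∏ k, ‖x k j‖) ^ s :=
    summable_prod_rpow_of_summable_rpow (fun k j => norm_nonneg _) hq
      (fun k => (hcot k).summable_norm_rpow 𝕂 (hq k) (hx k)) hs hs1
  refine (hprod.mul_left (‖T‖ ^ s)).of_nonneg_of_le (fun j => by positivity) fun j => ?_
  calc ‖T fun k => x k j‖ ^ s ≤ (‖T‖ * ∏ k, ‖x k j‖) ^ s :=
        Real.rpow_le_rpow (norm_nonneg _) (T.le_opNorm _) hs.le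
    _ = ‖T‖ ^ s * (∏ k, ‖x k j‖) ^ s :=
        Real.mul_rpow (norm_nonneg _) (prod_nonneg fun k _ => norm_nonneg _)

/-- If each `X_j` has cotype `q_j`, then every continuous `m`-linear mapping into any Banach
space `Y` is absolutely `(s;1)`-summing whenever `1/s ≤ ∑ 1/q_k`. -/
theorem stmt7 (𝕂 : Type*) [RCLike 𝕂] (m : ℕ) (hm : 0 < m)
    (X : Fin m → Type*) [∀ k, NormedAddCommGroup (X k)]
    [∀ k, NormedSpace 𝕂 (X k)] [∀ k, CompleteSpace (X k)]
    (q : Fin m → ℝ) (hq2 : ∀ k, 2 ≤ q k) (hcot : ∀ k, HasCotype (X k) (q k))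
    (Y : Type*) [NormedAddCommGroup Y] [NormedSpace 𝕂 Y] [CompleteSpace Y]
    (s : ℝ) (hs : 0 < s) (hs1 : 1 / s ≤ ∑ k, 1 / q k)
    (T : ContinuousMultilinearMap 𝕂 X Y)
    (x : ∀ k, ℕ → X k) (hx : ∀ k, WeaklySummable 𝕂 (x k)) :
    Summable fun j => ‖T fun k => x k j‖ ^ s :=
  stmt7_general 𝕂 m X q hq2 hcot Y s hs hs1 T x hx
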